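/- arXiv:1707.09579 — 2 statements merged into one kernel-verified Lean document; each statement's English description precedes it below -/
import Mathlib

section
/- Let N be a tree-child network on n ≥ 2 leaves with r reticulations. Then the number of tree-child respecting SNPR+ operations on N equals 4n² − 2nr − 8n − 2r² + 2r + 4 − Σ_{e ∈ E_{PS}} δ_T(e). -/
/-!
Formalization of rooted binary phylogenetic networks (directed multigraphs with
labelled leaves), tree-child networks, and the SNPR / SNPR+ / SNPR− rearrangement
operations, following Klawitter, "The SNPR neighbourhood of tree-child networks".
-/

noncomputable section

attribute [local instance] Classical.propDecidable

/-- Raw data of a (rooted, binary) phylogenetic network on `n` taxa: a finite vertex set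
(vertices are natural numbers), a multiset of directed edges (parallel edges allowed),
a distinguished root, and an injective labelling of the leaves by `Fin n`. -/
structure RawNet (n : ℕ) where
  V : Finset ℕ
  E : Multiset (ℕ × ℕ)
  root : ℕ
  leaf : Fin n → ℕ

namespace RawNet

variable {n : ℕ}

/-- Adjacency: there is an edge from `a` to `b`. -/
def Adj (N : RawNet n) (a b : ℕ) : Prop := (a, b) ∈ N.E

/-- In-degree of a vertex (counting parallel edges). -/
def inDeg (N : RawNet n) (v : ℕ) : ℕ := (N.E.filter (fun e => e.2 = v)).card

/-- Out-degree of a vertex (counting parallel edges). -/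
def outDeg (N : RawNet n) (v : ℕ) : ℕ := (N.E.filter (fun e => e.1 = v)).card

/-- `v` is a reticulation (in-degree two). -/
def IsRet (N : RawNet n) (v : ℕ) : Prop := N.inDeg v = 2

/-- Edge `g` is a descendant of edge `e`: `g` starts at the head of `e` or at a vertex
reachable from the head of `e` by a directed path. -/
def EdgeDesc (N : RawNet n) (e g : ℕ × ℕ) : Prop :=
  g.1 = e.2 ∨ Relation.TransGen N.Adj e.2 g.1

/-- `δ(e)`: the number of descendant edges of `e`. -/
def delta (N : RawNet n) (e : ℕ × ℕ) : ℕ :=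
  (N.E.filter (fun g => N.EdgeDesc e g)).card

/-- `δ_T(e)`: the number of descendant tree edges of `e`. -/
def deltaT (N : RawNet n) (e : ℕ × ℕ) : ℕ :=
  (N.E.filter (fun g => N.EdgeDesc e g ∧ ¬ N.IsRet g.2)).card

/-- `N` is a valid rooted binary phylogenetic network: a DAG whose root has in-degree 0 and
out-degree 1, whose `n` leaves (in-degree 1, out-degree 0) are bijectively labelled, and all
of whose other vertices are inner tree vertices (in 1, out 2) or reticulations (in 2, out 1). -/
structure IsPhylo (N : RawNet n) : Prop where
  edge_mem : ∀ e ∈ N.E, e.1 ∈ N.V ∧ e.2 ∈ N.V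
  acyclic : ∀ v, ¬ Relation.TransGen N.Adj v v
  root_mem : N.root ∈ N.V
  root_in : N.inDeg N.root = 0
  root_out : N.outDeg N.root = 1
  leaf_mem : ∀ i, N.leaf i ∈ N.V
  leaf_inj : Function.Injective N.leaf
  leaf_in : ∀ i, N.inDeg (N.leaf i) = 1
  leaf_out : ∀ i, N.outDeg (N.leaf i) = 0
  classify : ∀ v ∈ N.V, v = N.root ∨ (∃ i, v = N.leaf i) ∨
    (N.inDeg v = 1 ∧ N.outDeg v = 2) ∨ (N.inDeg v = 2 ∧ N.outDeg v = 1)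

/-- Tree-child: every non-leaf vertex has a child that is a tree vertex. -/
def TreeChild (N : RawNet n) : Prop :=
  ∀ v ∈ N.V, 1 ≤ N.outDeg v → ∃ w, (v, w) ∈ N.E ∧ ¬ N.IsRet w

/-- Isomorphism of networks fixing the labelled leaves (and the root). -/
def Iso (A B : RawNet n) : Prop :=
  ∃ φ : ℕ → ℕ, Set.BijOn φ ↑A.V ↑B.V ∧
    B.E = A.E.map (fun p => (φ p.1, φ p.2)) ∧
    φ A.root = B.root ∧ ∀ i, φ (A.leaf i) = B.leaf i

/-- The network resulting from the SNPR operation that prunes the edge `(u,v)` (where `u` has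
parent edge `(a,u)` and sibling edge `(u,w)`) and regrafts it to the edge `(x,y)`, using the
fresh vertex `u''` to subdivide the regraft edge.  If the regraft edge is the parent or
sibling edge of `u`, it has become the edge `(a,w)` after suppressing `u`. -/
def snprResult (N : RawNet n) (u v a w x y u'' : ℕ) : RawNet n :=
  let E1 : Multiset (ℕ × ℕ) := (((N.E.erase (u, v)).erase (a, u)).erase (u, w)) + {(a, w)}
  let f : ℕ × ℕ := if (x, y) = (a, u) ∨ (x, y) = (u, w) then (a, w) else (x, y)
  { V := insert u'' (N.V.erase u)
    E := (E1.erase f) + {(f.1, u''), (u'', f.2), (u'', v)}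
    root := N.root
    leaf := N.leaf }

/-- The network resulting from the SNPR+ operation `(e,f)`: subdivide `f` with `u'` and `e`
with `v'` and add the edge `(u',v')`; if `e = f`, subdivide `e` twice (with `u'` the parent
of `v'`) and add the (parallel) edge `(u',v')`. -/
def snprPlusResult (N : RawNet n) (e f : ℕ × ℕ) (u' v' : ℕ) : RawNet n :=
  if e = f then
    { V := insert u' (insert v' N.V)
      E := (N.E.erase e) + {(e.1, u'), (u', v'), (u', v'), (v', e.2)}
      root := N.root
      leaf := N.leaf }
  else
    { V := insert u' (insert v' N.V)
      E := ((N.E.erase e).erase f) + {(e.1, v'), (v', e.2), (f.1, u'), (u', f.2), (u', v')}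
      root := N.root
      leaf := N.leaf }

/-- The network resulting from the SNPR− operation deleting the reticulation edge `(u,v)`
and suppressing `u` and `v`; here `(a,u)` is the parent edge of `u`, `(u,w)` the other child
edge of `u`, `(c,v)` the other parent edge of `v`, and `(v,z)` the child edge of `v`.
(If `(u,v)` is one of a pair of parallel edges, i.e. `c = u`, suppressing merges into `(a,z)`.) -/
def snprMinusResult (N : RawNet n) (u v a w c z : ℕ) : RawNet n :=
  if u = c then
    { V := (N.V.erase u).erase v
      E := ((((N.E.erase (u, v)).erase (u, v)).erase (a, u)).erase (v, z)) + {(a, z)}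
      root := N.root
      leaf := N.leaf }
  else
    { V := (N.V.erase u).erase v
      E := (((((N.E.erase (u, v)).erase (a, u)).erase (u, w)).erase (c, v)).erase (v, z))
            + {(a, w), (c, z)}
      root := N.root
      leaf := N.leaf }

/-- `(e,f)` is a tree-child respecting SNPR operation on `N` (with `f` an edge other than `e`,
which is expressed by taking `f` from `N.E.erase e` wherever this predicate is used). -/
def SNPRtcCond (N : RawNet n) (e f : ℕ × ℕ) : Prop :=
  N.inDeg e.1 = 1 ∧ ¬ N.EdgeDesc e f ∧
  ∃ a w u'', (a, e.1) ∈ N.E ∧ (e.1, w) ∈ N.E.erase e ∧ u'' ∉ N.V ∧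
    (N.snprResult e.1 e.2 a w f.1 f.2 u'').TreeChild

/-- The number of tree-child respecting SNPR operations on `N`
(operations are pairs of edges, counted with multiplicity). -/
def numSNPRtc (N : RawNet n) : ℕ :=
  (N.E.map (fun e => ((N.E.erase e).filter (fun f => N.SNPRtcCond e f)).card)).sum

/-- `(e,f)` is a trivial tree-child respecting SNPR operation on `N`. -/
def SNPRtrivCond (N : RawNet n) (e f : ℕ × ℕ) : Prop :=
  N.inDeg e.1 = 1 ∧ ¬ N.EdgeDesc e f ∧
  ∃ a w u'', (a, e.1) ∈ N.E ∧ (e.1, w) ∈ N.E.erase e ∧ u'' ∉ N.V ∧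
    (N.snprResult e.1 e.2 a w f.1 f.2 u'').TreeChild ∧
    (N.snprResult e.1 e.2 a w f.1 f.2 u'').Iso N

/-- The number of trivial tree-child respecting SNPR operations on `N`. -/
def numSNPRtcTrivial (N : RawNet n) : ℕ :=
  (N.E.map (fun e => ((N.E.erase e).filter (fun f => N.SNPRtrivCond e f)).card)).sum

/-- `(e,f)` is a tree-child respecting SNPR+ operation on `N`. -/
def SNPRplusTcCond (N : RawNet n) (e f : ℕ × ℕ) : Prop :=
  ¬ N.IsRet e.1 ∧ ¬ N.EdgeDesc e f ∧
  ∃ u' v', u' ∉ N.V ∧ v' ∉ N.V ∧ u' ≠ v' ∧ (N.snprPlusResult e f u' v').TreeChild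

/-- The number of tree-child respecting SNPR+ operations on `N`. -/
def numSNPRplusTc (N : RawNet n) : ℕ :=
  (N.E.map (fun e => (N.E.filter (fun f => N.SNPRplusTcCond e f)).card)).sum

/-- `e` induces a tree-child respecting SNPR− operation on `N`. -/
def SNPRminusTcCond (N : RawNet n) (e : ℕ × ℕ) : Prop :=
  N.IsRet e.2 ∧ ¬ N.IsRet e.1 ∧
  ∃ a w c z, (a, e.1) ∈ N.E ∧ (e.1, w) ∈ N.E.erase e ∧ (c, e.2) ∈ N.E.erase e ∧
    (e.2, z) ∈ N.E ∧ (N.snprMinusResult e.1 e.2 a w c z).TreeChild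

/-- The number of tree-child respecting SNPR− operations on `N`. -/
def numSNPRminusTc (N : RawNet n) : ℕ :=
  (N.E.filter (fun e => N.SNPRminusTcCond e)).card

/-- `M` is the (concrete) result of applying one SNPR operation to `N`. -/
def IsSNPRres (N M : RawNet n) : Prop :=
  ∃ e f a w u'', e ∈ N.E ∧ f ∈ N.E.erase e ∧ N.inDeg e.1 = 1 ∧ ¬ N.EdgeDesc e f ∧
    (a, e.1) ∈ N.E ∧ (e.1, w) ∈ N.E.erase e ∧ u'' ∉ N.V ∧
    M = N.snprResult e.1 e.2 a w f.1 f.2 u''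

/-- `M` is the (concrete) result of applying one SNPR+ operation to `N`. -/
def IsSNPRplusRes (N M : RawNet n) : Prop :=
  ∃ e f u' v', e ∈ N.E ∧ f ∈ N.E ∧ ¬ N.IsRet e.1 ∧ ¬ N.EdgeDesc e f ∧
    u' ∉ N.V ∧ v' ∉ N.V ∧ u' ≠ v' ∧ M = N.snprPlusResult e f u' v'

/-- `M` is the (concrete) result of applying one SNPR− operation to `N`. -/
def IsSNPRminusRes (N M : RawNet n) : Prop :=
  ∃ e a w c z, e ∈ N.E ∧ N.IsRet e.2 ∧ ¬ N.IsRet e.1 ∧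
    (a, e.1) ∈ N.E ∧ (e.1, w) ∈ N.E.erase e ∧ (c, e.2) ∈ N.E.erase e ∧ (e.2, z) ∈ N.E ∧
    M = N.snprMinusResult e.1 e.2 a w c z

/-- `M` is the result of one operation of type SNPR, SNPR+ or SNPR−. -/
def IsAnyRes (N M : RawNet n) : Prop :=
  N.IsSNPRres M ∨ N.IsSNPRplusRes M ∨ N.IsSNPRminusRes M

/-- The neighbourhood of `N` with respect to a one-step result relation `P` — i.e. the set of
tree-child networks, other than `N` itself, obtainable from `N` by exactly one operation,
counted up to leaf-label-preserving isomorphism — has exactly `k` elements. -/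
def NbhdSizeIs (N : RawNet n) (P : RawNet n → RawNet n → Prop) (k : ℕ) : Prop :=
  ∃ L : List (RawNet n), L.length = k ∧ L.Pairwise (fun A B => ¬ A.Iso B) ∧
    (∀ M ∈ L, P N M ∧ M.TreeChild ∧ ¬ M.Iso N) ∧
    (∀ M, P N M → M.TreeChild → ¬ M.Iso N → ∃ M' ∈ L, M.Iso M')

/-- Number of reticulations `r`. -/
def numRet (N : RawNet n) : ℕ := (N.V.filter (fun v => N.IsRet v)).card

/-- `r₁`: number of reticulations whose child is a leaf. -/
def numR1 (N : RawNet n) : ℕ :=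
  (N.V.filter (fun v => N.IsRet v ∧ ∃ w, (v, w) ∈ N.E ∧ N.outDeg w = 0)).card

/-- `r₂`: number of `r₂` structures (a directed path reticulation → `u` → reticulation),
counted by the middle vertex `u`. -/
def numR2 (N : RawNet n) : ℕ :=
  (N.V.filter (fun u => (∃ x, (x, u) ∈ N.E ∧ N.IsRet x) ∧
    ∃ w, (u, w) ∈ N.E ∧ N.IsRet w)).card

/-- `r₃`: number of `r₃` structures (edges `(x,y), (x,u), (u,w)` with `y, w` reticulations),
counted by the middle vertex `u`. -/
def numR3 (N : RawNet n) : ℕ :=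
  (N.V.filter (fun u => (∃ x y, (x, u) ∈ N.E ∧ (x, y) ∈ N.E.erase (x, u) ∧ N.IsRet y) ∧
    ∃ w, (u, w) ∈ N.E ∧ N.IsRet w)).card

/-- `Δ`: number of triangles (edges `(x,u), (u,w), (x,w)`), counted by the middle vertex `u`. -/
def numTri (N : RawNet n) : ℕ :=
  (N.V.filter (fun u => ∃ x w, (x, u) ∈ N.E ∧ (u, w) ∈ N.E ∧ (x, w) ∈ N.E)).card

/-- `Δ*`: number of tree-branching triangles (the second child `v` of the middle vertex `u`
is incident to three pure tree edges). -/
def numTriStar (N : RawNet n) : ℕ :=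
  (N.V.filter (fun u => ∃ x w v, (x, u) ∈ N.E ∧ (u, w) ∈ N.E ∧ (x, w) ∈ N.E ∧
    (u, v) ∈ N.E.erase (u, w) ∧ N.inDeg v = 1 ∧ N.outDeg v = 2 ∧
    ∀ z, (v, z) ∈ N.E → ¬ N.IsRet z)).card

/-- `D`: number of diamonds (edges `(u,v), (u,w), (v,z), (w,z)` with `v ≠ w`),
counted by the top vertex `u`. -/
def numDia (N : RawNet n) : ℕ :=
  (N.V.filter (fun u => ∃ v w z, v ≠ w ∧ (u, v) ∈ N.E ∧ (u, w) ∈ N.E ∧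
    (v, z) ∈ N.E ∧ (w, z) ∈ N.E)).card

/-- `T`: number of trapezoids (edges `(u,v), (v,w), (w,z), (u,z)`) whose outgoing edges at
`v` and `w` are pure tree edges, counted by the top vertex `u`. -/
def numTrap (N : RawNet n) : ℕ :=
  (N.V.filter (fun u => ∃ v w z, (u, v) ∈ N.E ∧ (v, w) ∈ N.E ∧ (w, z) ∈ N.E ∧
    (u, z) ∈ N.E ∧ (∃ v', (v, v') ∈ N.E.erase (v, w) ∧ ¬ N.IsRet v') ∧
    (∃ w', (w, w') ∈ N.E.erase (w, z) ∧ ¬ N.IsRet w'))).card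

/-- `e` is a critical edge: the tree edge from the middle tree vertex of an `r₂` or `r₃`
structure (or triangle) to its second child. -/
def Critical (N : RawNet n) (e : ℕ × ℕ) : Prop :=
  ¬ N.IsRet e.2 ∧ (∃ w, (e.1, w) ∈ N.E ∧ N.IsRet w) ∧
  ((∃ x, (x, e.1) ∈ N.E ∧ N.IsRet x) ∨
   (∃ x y, (x, e.1) ∈ N.E ∧ (x, y) ∈ N.E.erase (x, e.1) ∧ N.IsRet y))

/-- `e` is a pure tree edge (both endpoints are tree vertices and its head is a tree vertex). -/
def PureTree (N : RawNet n) (e : ℕ × ℕ) : Prop := ¬ N.IsRet e.1 ∧ ¬ N.IsRet e.2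

/-- `Σ_{e ∈ E_{T*}} δ(e)`: sum of `δ` over the pure non-critical tree edges. -/
def sumDeltaTstar (N : RawNet n) : ℕ :=
  ((N.E.filter (fun e => N.PureTree e ∧ ¬ N.Critical e)).map (fun e => N.delta e)).sum

/-- `Σ_{e ∈ E_R} δ_T(e)`: sum of `δ_T` over the reticulation edges. -/
def sumDeltaT_R (N : RawNet n) : ℕ :=
  ((N.E.filter (fun e => N.IsRet e.2)).map (fun e => N.deltaT e)).sum

/-- `e` is the bottom side of a triangle. -/
def TriBottom (N : RawNet n) (e : ℕ × ℕ) : Prop := ∃ x, (x, e.1) ∈ N.E ∧ (x, e.2) ∈ N.E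

/-- `Σ_{e ∈ E_Δ} δ_T(e)`: sum of `δ_T` over the bottom sides of triangles. -/
def sumDeltaT_Tri (N : RawNet n) : ℕ :=
  ((N.E.filter (fun e => N.TriBottom e)).map (fun e => N.deltaT e)).sum

/-- `e` is a pure tree edge whose sibling edge is also a pure tree edge. -/
def PSedge (N : RawNet n) (e : ℕ × ℕ) : Prop :=
  N.PureTree e ∧ ∃ w, (e.1, w) ∈ N.E.erase e ∧ ¬ N.IsRet w

/-- `Σ_{e ∈ E_{PS}} δ_T(e)`. -/
def sumDeltaT_PS (N : RawNet n) : ℕ :=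
  ((N.E.filter (fun e => N.PSedge e)).map (fun e => N.deltaT e)).sum

/-- `Σ_{e ∈ E} δ(e)`: sum of `δ` over all edges. -/
def sumDeltaAll (N : RawNet n) : ℕ :=
  (N.E.map (fun e => N.delta e)).sum

/-- Number of pure inner tree edges: edges incident to no reticulation, no leaf,
and not to the root. -/
def numPureInner (N : RawNet n) : ℕ :=
  (N.E.filter (fun e => e.1 ≠ N.root ∧ e.2 ≠ N.root ∧ N.outDeg e.1 ≠ 0 ∧
    N.outDeg e.2 ≠ 0 ∧ ¬ N.IsRet e.1 ∧ ¬ N.IsRet e.2)).card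

/-- The multiset of tree-child respecting SNPR operations `(e,f)` on `N`
(with multiplicity coming from parallel edges). -/
def OpsTCms (N : RawNet n) : Multiset ((ℕ × ℕ) × (ℕ × ℕ)) :=
  N.E.bind (fun e => ((N.E.erase e).filter (fun f => N.SNPRtcCond e f)).map (fun f => (e, f)))

/-- The result of the SNPR operation `θ = (e,f)` on `N` is isomorphic to `M`. -/
def ResultIsoOp (N : RawNet n) (θ : (ℕ × ℕ) × (ℕ × ℕ)) (M : RawNet n) : Prop :=
  ∃ a w u'', (a, θ.1.1) ∈ N.E ∧ (θ.1.1, w) ∈ N.E.erase θ.1 ∧ u'' ∉ N.V ∧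
    (N.snprResult θ.1.1 θ.1.2 a w θ.2.1 θ.2.2 u'').Iso M

/-- `M ≠ N` is obtained from `N` by at least two distinct (redundant) non-trivial
tree-child respecting SNPR operations. -/
def MultiResult (N M : RawNet n) : Prop :=
  ¬ M.Iso N ∧ ∃ θ θ', θ ∈ N.OpsTCms ∧ θ' ∈ N.OpsTCms ∧
    (θ ≠ θ' ∨ 2 ≤ N.OpsTCms.count θ) ∧ N.ResultIsoOp θ M ∧ N.ResultIsoOp θ' M

/-- The number of non-trivial redundant tree-child respecting SNPR operations on `N`. -/
def numNontrivRedundant (N : RawNet n) : ℕ :=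
  (N.OpsTCms.filter (fun θ => ∃ M, N.MultiResult M ∧ N.ResultIsoOp θ M)).card

/-- The number of redundancy sets of non-trivial tree-child respecting SNPR operations on `N`
is `k` (one redundancy set per isomorphism class of networks reached by at least two
redundant non-trivial operations). -/
def NumRedSetsIs (N : RawNet n) (k : ℕ) : Prop :=
  ∃ L : List (RawNet n), L.length = k ∧ L.Pairwise (fun A B => ¬ A.Iso B) ∧
    (∀ M ∈ L, N.MultiResult M) ∧ (∀ M, N.MultiResult M → ∃ M' ∈ L, M.Iso M')

/-- `M` is the result of an NNI operation on the tree `T`: for an inner tree edge `(u,v)`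
(the axis) with sibling edge `(u,s)`, prune an edge `(v,g2)` outgoing from `v`
(whose sibling edge at `v` is `(v,w')`) and regraft it to `(u,s)`. -/
def IsNNIres (T M : RawNet n) : Prop :=
  ∃ u v s g2 w' u'', (u, v) ∈ T.E ∧ (u, s) ∈ T.E.erase (u, v) ∧ T.inDeg u = 1 ∧
    (v, g2) ∈ T.E ∧ (v, w') ∈ T.E.erase (v, g2) ∧ u'' ∉ T.V ∧
    M = T.snprResult v g2 u w' u s u''

end RawNet

/-- The balanced (complete) rooted binary phylogenetic tree on `2^k` leaves: root `0` with
root edge `(0,1)`, inner vertices `1, …, 2^k − 1` with children `2i` and `2i+1`, and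
leaves `2^k, …, 2^(k+1) − 1`. -/
def balancedTree (k : ℕ) : RawNet (2 ^ k) :=
  { V := Finset.range (2 ^ (k + 1))
    E := (0, 1) ::ₘ ((Finset.Icc 1 (2 ^ k - 1)).val.bind
          (fun i => {(i, 2 * i), (i, 2 * i + 1)}))
    root := 0
    leaf := fun i => 2 ^ k + (i : ℕ) }

/-- The tree-child network consisting of a chain of `n − 1` triangles: the root is `0`; the
`j`-th triangle (for `j = 0, …, n−2`) has top vertex `3j+1`, middle tree vertex `3j+2` and
reticulation `3j+3`; the second child of the middle vertex is the leaf `3(n−1)+1+j`; the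
child of the reticulation of triangle `j` is the top vertex of triangle `j+1`, except for
the last triangle, whose reticulation has the leaf `3(n−1)+n` as its child. -/
def chainNet (n : ℕ) : RawNet n :=
  { V := Finset.range (3 * (n - 1) + 1 + n)
    E := (0, 1) ::ₘ
      (((Multiset.range (n - 1)).bind (fun j =>
          {(3 * j + 1, 3 * j + 2), (3 * j + 1, 3 * j + 3), (3 * j + 2, 3 * j + 3),
           (3 * j + 2, 3 * (n - 1) + 1 + j)}))
        + ((Multiset.range (n - 2)).map (fun j => (3 * j + 3, 3 * (j + 1) + 1)))
        + {(3 * (n - 2) + 3, 3 * (n - 1) + 1 + (n - 1))})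
    root := 0
    leaf := fun i => 3 * (n - 1) + 1 + (i : ℕ) }


/-!
An SNPR+ operation `(e, f)` changes the out-neighbourhoods only at the tail of `e`, at the tail
of `f` and at the two new vertices `u'` (children `f.2` and the new reticulation `v'`) and `v'`
(child `e.2`). Hence the result is tree-child exactly when `e ≠ f`, `e.2` and `f.2` are tree
vertices and `e` has a tree sibling, i.e. `e ∈ E_PS` and `f` is a tree edge other than `e` that is
not below `e`. Each `e ∈ E_PS` therefore admits `#tree edges − δ_T(e) − 1` operations.

Counting in- and out-degrees gives `n + r − 1` inner tree vertices and `2n + r − 1` tree edges.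
In a tree-child network each inner tree vertex is the tail of either two edges of `E_PS` or
exactly one of the `2r` reticulation edges, so `|E_PS| = 2(n + r − 1) − 4r = 2n − 2r − 2`, and
the count is `(2n − 2r − 2)(2n + r − 2) − Σ_{e ∈ E_PS} δ_T(e)`.
-/

namespace Multiset

variable {α β M : Type*}

theorem card_eq_sum_card_fiberwise [DecidableEq β] {s : Multiset α} {t : Finset β} {f : α → β}
    (H : ∀ a ∈ s, f a ∈ t) : card s = ∑ b ∈ t, card (s.filter fun a => f a = b) := by
  rw [← card_map f, ← sum_count_eq_card (by simpa using H)]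
  refine Finset.sum_congr rfl fun b _ => ?_
  rw [count_map]
  exact congrArg card (filter_congr fun a _ => eq_comm)

theorem card_filter_ne_add_count [DecidableEq α] (s : Multiset α) (a : α) :
    card (s.filter (· ≠ a)) + count a s = card s := by
  conv_rhs => rw [← filter_add_not (· ≠ a) s]
  simp only [not_not, card_add, filter_eq', card_replicate]

theorem sum_map_eq_sum_map_filter [AddCommMonoid M] (p : α → Prop) [DecidablePred p]
    {s : Multiset α} {f : α → M} (H : ∀ a ∈ s, ¬ p a → f a = 0) :
    (s.map f).sum = ((s.filter p).map f).sum := by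
  conv_lhs => rw [← filter_add_not p s]
  rw [map_add, sum_add, sum_eq_zero (s := map f (s.filter fun a => ¬ p a)) ?_, add_zero]
  simp only [mem_map, mem_filter]
  rintro _ ⟨a, ⟨ha, hpa⟩, rfl⟩
  exact H a ha hpa

end Multiset

namespace RawNet

variable {n : ℕ} {N : RawNet n} {e f g : ℕ × ℕ} {u' v' v w x a b : ℕ}

def innerTree (N : RawNet n) : Finset ℕ := N.V.filter fun v => N.inDeg v = 1 ∧ N.outDeg v = 2

lemma one_le_inDeg (hg : g ∈ N.E) : 1 ≤ N.inDeg g.2 :=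
  Multiset.card_pos_iff_exists_mem.2 ⟨g, Multiset.mem_filter.2 ⟨hg, rfl⟩⟩

lemma one_le_outDeg (hg : g ∈ N.E) : 1 ≤ N.outDeg g.1 :=
  Multiset.card_pos_iff_exists_mem.2 ⟨g, Multiset.mem_filter.2 ⟨hg, rfl⟩⟩

lemma two_le_outDeg_of_mem_erase (he : e ∈ N.E) (hw : (e.1, w) ∈ N.E.erase e) :
    2 ≤ N.outDeg e.1 := by
  have : 1 ≤ ((N.E.erase e).filter fun g => g.1 = e.1).card :=
    Multiset.card_pos_iff_exists_mem.2 ⟨(e.1, w), Multiset.mem_filter.2 ⟨hw, rfl⟩⟩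
  rw [outDeg, ← Multiset.cons_erase he, Multiset.filter_cons, if_pos rfl, Multiset.card_add,
    Multiset.card_singleton]
  omega

namespace IsPhylo

lemma inDeg_eq_zero_of_notMem (hN : N.IsPhylo) (hv : v ∉ N.V) : N.inDeg v = 0 :=
  Multiset.card_eq_zero.2 <| Multiset.filter_eq_nil.2 fun g hg hgv =>
    hv (hgv ▸ (hN.edge_mem g hg).2)

lemma inDeg_snd_eq_one (hN : N.IsPhylo) (hg : g ∈ N.E) (hr : ¬ N.IsRet g.2) :
    N.inDeg g.2 = 1 := by
  have := one_le_inDeg hg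
  rcases hN.classify g.2 (hN.edge_mem g hg).2 with h | ⟨i, h⟩ | h | h
  · rw [h, hN.root_in] at this; omega
  · rw [h, hN.leaf_in]
  · exact h.1
  · exact absurd h.1 hr

lemma count_eq_one (hN : N.IsPhylo) (hg : g ∈ N.E) (hr : ¬ N.IsRet g.2) : N.E.count g = 1 := by
  have hle : N.E.count g ≤ N.inDeg g.2 := by
    rw [inDeg, ← Multiset.count_filter_of_pos (p := fun h => h.2 = g.2) rfl]
    exact Multiset.count_le_card g _
  have := Multiset.one_le_count_iff_mem.2 hg
  have := hN.inDeg_snd_eq_one hg hr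
  omega

lemma not_edgeDesc_self (hN : N.IsPhylo) (hg : g ∈ N.E) : ¬ N.EdgeDesc g g := by
  have hadj : N.Adj g.1 g.2 := hg
  rintro (h | h)
  · exact hN.acyclic g.2 (.single (h ▸ hadj))
  · exact hN.acyclic g.2 (h.tail hadj)

lemma outDeg_eq_one_of_isRet (hN : N.IsPhylo) (hv : v ∈ N.V) (hr : N.IsRet v) :
    N.outDeg v = 1 := by
  have hr : N.inDeg v = 2 := hr
  rcases hN.classify v hv with h | ⟨i, h⟩ | h | h
  · rw [h, hN.root_in] at hr; omega
  · rw [h, hN.leaf_in] at hr; omega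
  · omega
  · exact h.2

lemma mem_innerTree_of_two_le_outDeg (hN : N.IsPhylo) (hv : v ∈ N.V) (h2 : 2 ≤ N.outDeg v) :
    v ∈ N.innerTree := by
  refine Finset.mem_filter.2 ⟨hv, ?_⟩
  rcases hN.classify v hv with h | ⟨i, h⟩ | h | h
  · rw [h, hN.root_out] at h2; omega
  · rw [h, hN.leaf_out] at h2; omega
  · exact h
  · omega

lemma mem_innerTree_of_isRet_snd (hN : N.IsPhylo) (htc : N.TreeChild) (hg : g ∈ N.E)
    (hr : N.IsRet g.2) : g.1 ∈ N.innerTree := by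
  have hg1 := (hN.edge_mem g hg).1
  obtain ⟨w, hw, hwr⟩ := htc g.1 hg1 (one_le_outDeg hg)
  have hne : (g.1, w) ≠ g := fun h => hwr (by rwa [show w = g.2 from congrArg Prod.snd h])
  exact hN.mem_innerTree_of_two_le_outDeg hg1
    (two_le_outDeg_of_mem_erase hg ((Multiset.mem_erase_of_ne hne).2 hw))

lemma sum_V (hN : N.IsPhylo) (F : ℕ → ℕ) :
    ∑ v ∈ N.V, F v = F N.root + ∑ i, F (N.leaf i) + ∑ v ∈ N.innerTree, F v
      + ∑ v ∈ N.V.filter N.IsRet, F v := by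
  have hV : N.V = insert N.root
      (Finset.univ.image N.leaf ∪ (N.innerTree ∪ N.V.filter N.IsRet)) := by
    ext v
    simp only [Finset.mem_insert, Finset.mem_union, Finset.mem_image, Finset.mem_univ, true_and,
      innerTree, Finset.mem_filter]
    constructor
    · intro hv
      rcases hN.classify v hv with h | ⟨i, h⟩ | h | h
      exacts [.inl h, .inr (.inl ⟨i, h.symm⟩), .inr (.inr (.inl ⟨hv, h⟩)),
        .inr (.inr (.inr ⟨hv, h.1⟩))]
    · rintro (rfl | ⟨i, rfl⟩ | ⟨hv, -⟩ | ⟨hv, -⟩)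
      exacts [hN.root_mem, hN.leaf_mem i, hv, hv]
  have hroot : N.root ∉ Finset.univ.image N.leaf ∪ (N.innerTree ∪ N.V.filter N.IsRet) := by
    simp only [Finset.mem_union, Finset.mem_image, Finset.mem_univ, true_and, innerTree,
      Finset.mem_filter, IsRet, hN.root_in, not_or]
    refine ⟨fun ⟨i, hi⟩ => ?_, by omega, by omega⟩
    have := hN.leaf_in i
    rw [hi, hN.root_in] at this
    omega
  have hleaf : Disjoint (Finset.univ.image N.leaf) (N.innerTree ∪ N.V.filter N.IsRet) := by
    simp only [Finset.disjoint_left, Finset.mem_image, Finset.mem_univ, true_and,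
      Finset.mem_union, innerTree, Finset.mem_filter, IsRet]
    rintro _ ⟨i, rfl⟩
    have := hN.leaf_in i
    have := hN.leaf_out i
    omega
  have hinner : Disjoint N.innerTree (N.V.filter N.IsRet) := by
    simp only [Finset.disjoint_left, innerTree, Finset.mem_filter, IsRet]
    omega
  conv_lhs => rw [hV]
  rw [Finset.sum_insert hroot, Finset.sum_union hleaf, Finset.sum_union hinner,
    Finset.sum_image fun i _ j _ h => hN.leaf_inj h]
  ring

lemma card_E_eq_via_inDeg (hN : N.IsPhylo) :
    Multiset.card N.E = n + N.innerTree.card + 2 * N.numRet := by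
  rw [Multiset.card_eq_sum_card_fiberwise fun g hg => (hN.edge_mem g hg).2]
  change ∑ v ∈ N.V, N.inDeg v = _
  rw [hN.sum_V, hN.root_in, Finset.sum_const_nat fun i _ => hN.leaf_in i,
    Finset.sum_const_nat fun v hv => (Finset.mem_filter.1 hv).2.1,
    Finset.sum_const_nat (s := N.V.filter N.IsRet) (m := 2) fun v hv =>
      (Finset.mem_filter.1 hv).2, numRet]
  simp [mul_comm]

lemma card_E_eq_via_outDeg (hN : N.IsPhylo) :
    Multiset.card N.E = 1 + 2 * N.innerTree.card + N.numRet := by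
  rw [Multiset.card_eq_sum_card_fiberwise fun g hg => (hN.edge_mem g hg).1]
  change ∑ v ∈ N.V, N.outDeg v = _
  rw [hN.sum_V, hN.root_out, Finset.sum_const_nat fun i _ => hN.leaf_out i,
    Finset.sum_const_nat fun v hv => (Finset.mem_filter.1 hv).2.2,
    Finset.sum_const_nat fun v hv =>
      hN.outDeg_eq_one_of_isRet (Finset.mem_filter.1 hv).1 (Finset.mem_filter.1 hv).2, numRet]
  simp [mul_comm]

lemma card_retEdges (hN : N.IsPhylo) :
    Multiset.card (N.E.filter fun g => N.IsRet g.2) = 2 * N.numRet := by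
  rw [Multiset.card_eq_sum_card_fiberwise (t := N.V.filter N.IsRet) (f := Prod.snd)
    fun g hg => by
      obtain ⟨hg, hr⟩ := Multiset.mem_filter.1 hg
      exact Finset.mem_filter.2 ⟨(hN.edge_mem g hg).2, hr⟩]
  rw [numRet, mul_comm, Finset.card_eq_sum_ones, Finset.sum_mul]
  refine Finset.sum_congr rfl fun v hv => ?_
  have hv : N.inDeg v = 2 := (Finset.mem_filter.1 hv).2
  rw [Multiset.filter_filter, one_mul, ← hv]
  exact congrArg _ (Multiset.filter_congr fun g _ => ⟨fun h => h.1, fun h => ⟨h, h ▸ hv⟩⟩)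

end IsPhylo

lemma exists_outEdges_eq_pair (h : N.outDeg v = 2) :
    ∃ a b, N.E.filter (fun g => g.1 = v) = {(v, a), (v, b)} := by
  obtain ⟨⟨x, a⟩, ⟨y, b⟩, hxy⟩ := Multiset.card_eq_two.1 h
  have hx : (x, a) ∈ N.E.filter (fun g => g.1 = v) := by rw [hxy]; simp
  have hy : (y, b) ∈ N.E.filter (fun g => g.1 = v) := by rw [hxy]; simp
  obtain rfl := (Multiset.mem_filter.1 hx).2
  obtain rfl := (Multiset.mem_filter.1 hy).2
  exact ⟨a, b, hxy⟩

lemma mem_erase_iff_of_outEdges_eq_pair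
    (hab : N.E.filter (fun g => g.1 = v) = {(v, a), (v, b)}) :
    (v, w) ∈ N.E.erase (v, a) ↔ w = b := by
  have ha : (v, a) ∈ N.E.filter (fun g => g.1 = v) := by rw [hab]; simp
  have hrest : (N.E.erase (v, a)).filter (fun g => g.1 = v) = {(v, b)} := by
    rw [← Multiset.cons_erase (Multiset.mem_of_mem_filter ha), Multiset.filter_cons,
      if_pos rfl, Multiset.singleton_add] at hab
    exact (Multiset.cons_inj_right _).1 hab
  have := Multiset.mem_filter (p := fun g : ℕ × ℕ => g.1 = v) (s := N.E.erase (v, a)) (a := (v, w))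
  rw [hrest] at this
  simpa using this.symm

lemma pSedge_iff_of_outEdges_eq_pair
    (hab : N.E.filter (fun g => g.1 = v) = {(v, a), (v, b)}) :
    N.PSedge (v, a) ↔ ¬ N.IsRet v ∧ ¬ N.IsRet a ∧ ¬ N.IsRet b := by
  simp only [PSedge, PureTree, mem_erase_iff_of_outEdges_eq_pair hab, exists_eq_left, and_assoc]

lemma card_pSedges_fiber_add (htc : N.TreeChild) (hv : v ∈ N.innerTree) :
    Multiset.card ((N.E.filter N.PSedge).filter fun g => g.1 = v)
      + 2 * Multiset.card ((N.E.filter fun g => N.IsRet g.2).filter fun g => g.1 = v) = 2 := by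
  obtain ⟨hvV, hin, hout⟩ := Finset.mem_filter.1 hv
  obtain ⟨a, b, hab⟩ := exists_outEdges_eq_pair hout
  have hba : N.E.filter (fun g => g.1 = v) = {(v, b), (v, a)} :=
    hab.trans (Multiset.pair_comm _ _)
  have hv : ¬ N.IsRet v := fun h => by rw [IsRet] at h; omega
  have hchild : ¬ N.IsRet a ∨ ¬ N.IsRet b := by
    obtain ⟨w, hw, hwr⟩ := htc v hvV (by omega)
    have : (v, w) ∈ N.E.filter (fun g => g.1 = v) := Multiset.mem_filter.2 ⟨hw, rfl⟩
    rw [hab] at this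
    simp only [Multiset.insert_eq_cons, Multiset.mem_cons, Multiset.mem_singleton,
      Prod.mk.injEq, true_and] at this
    rcases this with rfl | rfl
    exacts [.inl hwr, .inr hwr]
  rw [Multiset.filter_comm, Multiset.filter_comm _ (fun g : ℕ × ℕ => N.IsRet g.2), hab]
  simp only [Multiset.insert_eq_cons, Multiset.filter_cons, Multiset.filter_singleton,
    pSedge_iff_of_outEdges_eq_pair hab, pSedge_iff_of_outEdges_eq_pair hba]
  split_ifs <;> simp_all

lemma IsPhylo.card_pSedges_add_card_retEdges (hN : N.IsPhylo) (htc : N.TreeChild) :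
    Multiset.card (N.E.filter N.PSedge) + 2 * Multiset.card (N.E.filter fun g => N.IsRet g.2)
      = 2 * N.innerTree.card := by
  have hPS : ∀ g ∈ N.E.filter N.PSedge, g.1 ∈ N.innerTree := by
    intro g hg
    obtain ⟨hg, -, w, hw, -⟩ := Multiset.mem_filter.1 hg
    exact hN.mem_innerTree_of_two_le_outDeg (hN.edge_mem g hg).1
      (two_le_outDeg_of_mem_erase hg hw)
  have hRet : ∀ g ∈ N.E.filter (fun g => N.IsRet g.2), g.1 ∈ N.innerTree := fun g hg =>
    hN.mem_innerTree_of_isRet_snd htc (Multiset.mem_filter.1 hg).1 (Multiset.mem_filter.1 hg).2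
  rw [Multiset.card_eq_sum_card_fiberwise hPS, Multiset.card_eq_sum_card_fiberwise hRet,
    Finset.mul_sum, ← Finset.sum_add_distrib,
    Finset.sum_const_nat fun v hv => card_pSedges_fiber_add htc hv, mul_comm]

lemma snprPlusResult_V : (N.snprPlusResult e f u' v').V = insert u' (insert v' N.V) := by
  unfold snprPlusResult; split_ifs <;> rfl

lemma snprPlusResult_self_E :
    (N.snprPlusResult e e u' v').E
      = N.E.erase e + {(e.1, u'), (u', v'), (u', v'), (v', e.2)} := by
  simp only [snprPlusResult, if_true]

lemma snprPlusResult_E (hef : e ≠ f) :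
    (N.snprPlusResult e f u' v').E
      = (N.E.erase e).erase f + {(e.1, v'), (v', e.2), (f.1, u'), (u', f.2), (u', v')} := by
  simp only [snprPlusResult, if_neg hef]

lemma mem_snprPlusResult_E (hef : e ≠ f) :
    g ∈ (N.snprPlusResult e f u' v').E ↔ g ∈ (N.E.erase e).erase f ∨ g = (e.1, v') ∨
      g = (v', e.2) ∨ g = (f.1, u') ∨ g = (u', f.2) ∨ g = (u', v') := by
  simp only [snprPlusResult_E hef, Multiset.mem_add, Multiset.insert_eq_cons,
    Multiset.mem_cons, Multiset.mem_singleton]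

lemma inDeg_snprPlusResult (he : e ∈ N.E) (hf : f ∈ N.E) (x : ℕ) :
    (N.snprPlusResult e f u' v').inDeg x
      = N.inDeg x + (if u' = x then 1 else 0) + (if v' = x then 2 else 0) := by
  unfold inDeg
  by_cases hef : e = f
  · subst hef
    conv_rhs => rw [← Multiset.cons_erase he]
    simp only [snprPlusResult_self_E, Multiset.filter_add, Multiset.filter_cons,
      Multiset.insert_eq_cons, Multiset.filter_singleton, Multiset.card_add]
    split_ifs <;> simp_all <;> omega
  · have hf' : f ∈ N.E.erase e := (Multiset.mem_erase_of_ne (Ne.symm hef)).2 hf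
    conv_rhs => rw [← Multiset.cons_erase he, ← Multiset.cons_erase hf']
    simp only [snprPlusResult_E hef, Multiset.filter_add, Multiset.filter_cons,
      Multiset.insert_eq_cons, Multiset.filter_singleton, Multiset.card_add]
    split_ifs <;> simp_all <;> omega

lemma outDeg_snprPlusResult (he : e ∈ N.E) (hf : f ∈ N.E) (hef : e ≠ f) (x : ℕ) :
    (N.snprPlusResult e f u' v').outDeg x
      = N.outDeg x + (if u' = x then 2 else 0) + (if v' = x then 1 else 0) := by
  have hf' : f ∈ N.E.erase e := (Multiset.mem_erase_of_ne (Ne.symm hef)).2 hf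
  unfold outDeg
  conv_rhs => rw [← Multiset.cons_erase he, ← Multiset.cons_erase hf']
  simp only [snprPlusResult_E hef, Multiset.filter_add, Multiset.filter_cons,
    Multiset.insert_eq_cons, Multiset.filter_singleton, Multiset.card_add]
  split_ifs <;> simp_all <;> omega

lemma isRet_snprPlusResult_iff (he : e ∈ N.E) (hf : f ∈ N.E) (hu : u' ∉ N.V) (hv : v' ∉ N.V)
    (hx : x ∈ N.V) : (N.snprPlusResult e f u' v').IsRet x ↔ N.IsRet x := by
  have hxu : u' ≠ x := fun h => hu (h ▸ hx)
  have hxv : v' ≠ x := fun h => hv (h ▸ hx)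
  simp only [IsRet, inDeg_snprPlusResult he hf, if_neg hxu, if_neg hxv, add_zero]

namespace IsPhylo

lemma isRet_snprPlusResult_head (hN : N.IsPhylo) (he : e ∈ N.E) (hf : f ∈ N.E)
    (hv : v' ∉ N.V) (huv : u' ≠ v') : (N.snprPlusResult e f u' v').IsRet v' := by
  simp only [IsRet, inDeg_snprPlusResult he hf, hN.inDeg_eq_zero_of_notMem hv, if_neg huv]
  rfl

lemma not_isRet_snprPlusResult_tail (hN : N.IsPhylo) (he : e ∈ N.E) (hf : f ∈ N.E)
    (hu : u' ∉ N.V) (huv : u' ≠ v') : ¬ (N.snprPlusResult e f u' v').IsRet u' := by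
  simp [IsRet, inDeg_snprPlusResult he hf, hN.inDeg_eq_zero_of_notMem hu, Ne.symm huv]

/-- Both new edges `(u', v')` point at the reticulation `v'`, so `u'` has no tree child. -/
lemma not_treeChild_snprPlusResult_self (hN : N.IsPhylo) (he : e ∈ N.E)
    (hu : u' ∉ N.V) (hv : v' ∉ N.V) (huv : u' ≠ v') :
    ¬ (N.snprPlusResult e e u' v').TreeChild := by
  intro htc
  have hmem : ((u', v') : ℕ × ℕ) ∈ (N.snprPlusResult e e u' v').E := by
    simp [snprPlusResult_self_E]
  obtain ⟨w, hw, hwr⟩ := htc u' (by simp [snprPlusResult_V]) (one_le_outDeg hmem)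
  simp only [snprPlusResult_self_E, Multiset.mem_add, Multiset.insert_eq_cons, Multiset.mem_cons,
    Multiset.mem_singleton, Prod.mk.injEq] at hw
  rcases hw with hw | ⟨rfl, -⟩ | ⟨-, rfl⟩ | ⟨-, rfl⟩ | ⟨rfl, -⟩
  · exact hu (hN.edge_mem _ (Multiset.mem_of_mem_erase hw)).1
  · exact hu (hN.edge_mem e he).1
  · exact hwr (hN.isRet_snprPlusResult_head he he hv huv)
  · exact hwr (hN.isRet_snprPlusResult_head he he hv huv)
  · exact huv rfl

lemma mem_V_of_mem_erase_erase (hN : N.IsPhylo) (hg : g ∈ (N.E.erase e).erase f) :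
    g.1 ∈ N.V ∧ g.2 ∈ N.V :=
  hN.edge_mem g (Multiset.mem_of_mem_erase (Multiset.mem_of_mem_erase hg))

lemma not_isRet_snd_right_of_treeChild_snprPlusResult (hN : N.IsPhylo) (he : e ∈ N.E)
    (hf : f ∈ N.E) (hef : e ≠ f) (hu : u' ∉ N.V) (hv : v' ∉ N.V) (huv : u' ≠ v')
    (htc : (N.snprPlusResult e f u' v').TreeChild) : ¬ N.IsRet f.2 := by
  have hmem : ((u', f.2) : ℕ × ℕ) ∈ (N.snprPlusResult e f u' v').E := by
    simp [mem_snprPlusResult_E hef]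
  obtain ⟨w, hw, hwr⟩ := htc u' (by simp [snprPlusResult_V]) (one_le_outDeg hmem)
  simp only [mem_snprPlusResult_E hef, Prod.mk.injEq] at hw
  rcases hw with hw | ⟨rfl, -⟩ | ⟨rfl, -⟩ | ⟨rfl, -⟩ | ⟨-, rfl⟩ | ⟨-, rfl⟩
  · exact absurd (hN.mem_V_of_mem_erase_erase hw).1 hu
  · exact absurd (hN.edge_mem e he).1 hu
  · exact absurd rfl huv
  · exact absurd (hN.edge_mem f hf).1 hu
  · exact (isRet_snprPlusResult_iff he hf hu hv (hN.edge_mem f hf).2).not.1 hwr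
  · exact absurd (hN.isRet_snprPlusResult_head he hf hv huv) hwr

lemma not_isRet_snd_left_of_treeChild_snprPlusResult (hN : N.IsPhylo) (he : e ∈ N.E)
    (hf : f ∈ N.E) (hef : e ≠ f) (hu : u' ∉ N.V) (hv : v' ∉ N.V) (huv : u' ≠ v')
    (htc : (N.snprPlusResult e f u' v').TreeChild) : ¬ N.IsRet e.2 := by
  have hmem : ((v', e.2) : ℕ × ℕ) ∈ (N.snprPlusResult e f u' v').E := by
    simp [mem_snprPlusResult_E hef]
  obtain ⟨w, hw, hwr⟩ := htc v' (by simp [snprPlusResult_V]) (one_le_outDeg hmem)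
  simp only [mem_snprPlusResult_E hef, Prod.mk.injEq] at hw
  rcases hw with hw | ⟨rfl, -⟩ | ⟨-, rfl⟩ | ⟨rfl, -⟩ | ⟨rfl, -⟩ | ⟨rfl, -⟩
  · exact absurd (hN.mem_V_of_mem_erase_erase hw).1 hv
  · exact absurd (hN.edge_mem e he).1 hv
  · exact (isRet_snprPlusResult_iff he hf hu hv (hN.edge_mem e he).2).not.1 hwr
  · exact absurd (hN.edge_mem f hf).1 hv
  · exact absurd rfl huv
  · exact absurd rfl huv

lemma exists_sibling_of_treeChild_snprPlusResult (hN : N.IsPhylo) (he : e ∈ N.E)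
    (hf : f ∈ N.E) (hef : e ≠ f) (hu : u' ∉ N.V) (hv : v' ∉ N.V) (huv : u' ≠ v')
    (htc : (N.snprPlusResult e f u' v').TreeChild) :
    ∃ w, (e.1, w) ∈ N.E.erase e ∧ ¬ N.IsRet w := by
  have he1 := (hN.edge_mem e he).1
  have hmem : ((e.1, v') : ℕ × ℕ) ∈ (N.snprPlusResult e f u' v').E := by
    simp [mem_snprPlusResult_E hef]
  obtain ⟨w, hw, hwr⟩ := htc e.1 (by simp [snprPlusResult_V, he1])
    (one_le_outDeg (g := (e.1, v')) hmem)
  simp only [mem_snprPlusResult_E hef, Prod.mk.injEq] at hw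
  rcases hw with hw | ⟨-, rfl⟩ | ⟨h, -⟩ | ⟨h, rfl⟩ | ⟨h, -⟩ | ⟨h, -⟩
  · exact ⟨w, Multiset.mem_of_mem_erase hw,
      (isRet_snprPlusResult_iff he hf hu hv (hN.mem_V_of_mem_erase_erase hw).2).not.1 hwr⟩
  · exact absurd (hN.isRet_snprPlusResult_head he hf hv huv) hwr
  · exact absurd (h ▸ he1) hv
  · refine ⟨f.2, ?_, hN.not_isRet_snd_right_of_treeChild_snprPlusResult he hf hef hu hv huv htc⟩
    rw [h]
    exact (Multiset.mem_erase_of_ne (Ne.symm hef)).2 hf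
  · exact absurd (h ▸ he1) hu
  · exact absurd (h ▸ he1) hu

lemma pSedge_of_treeChild_snprPlusResult (hN : N.IsPhylo) (he : e ∈ N.E)
    (hf : f ∈ N.E) (hef : e ≠ f) (hu : u' ∉ N.V) (hv : v' ∉ N.V) (huv : u' ≠ v')
    (htc : (N.snprPlusResult e f u' v').TreeChild) : N.PSedge e := by
  obtain ⟨w, hw, hwr⟩ := hN.exists_sibling_of_treeChild_snprPlusResult he hf hef hu hv huv htc
  have he1 := Finset.mem_filter.1
    (hN.mem_innerTree_of_two_le_outDeg (hN.edge_mem e he).1 (two_le_outDeg_of_mem_erase he hw))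
  refine ⟨⟨fun h => by rw [IsRet] at h; omega, ?_⟩, w, hw, hwr⟩
  exact hN.not_isRet_snd_left_of_treeChild_snprPlusResult he hf hef hu hv huv htc

lemma treeChild_snprPlusResult (hN : N.IsPhylo) (htc : N.TreeChild) (he : e ∈ N.E)
    (hf : f ∈ N.E) (hef : e ≠ f) (hu : u' ∉ N.V) (hv : v' ∉ N.V) (huv : u' ≠ v')
    (hPS : N.PSedge e) (hf2 : ¬ N.IsRet f.2) : (N.snprPlusResult e f u' v').TreeChild := by
  obtain ⟨⟨-, he2⟩, s, hs, hsr⟩ := hPS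
  have hret : ∀ {x}, x ∈ N.V → ((N.snprPlusResult e f u' v').IsRet x ↔ N.IsRet x) :=
    isRet_snprPlusResult_iff he hf hu hv
  intro x hx hxout
  rw [snprPlusResult_V, Finset.mem_insert, Finset.mem_insert] at hx
  rcases hx with rfl | rfl | hx
  · exact ⟨f.2, by simp [mem_snprPlusResult_E hef], (hret (hN.edge_mem f hf).2).not.2 hf2⟩
  · exact ⟨e.2, by simp [mem_snprPlusResult_E hef], (hret (hN.edge_mem e he).2).not.2 he2⟩
  by_cases hxf : x = f.1
  · exact ⟨u', by simp [mem_snprPlusResult_E hef, hxf],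
      hN.not_isRet_snprPlusResult_tail he hf hu huv⟩
  obtain ⟨w, hw, hwr⟩ : ∃ w, (x, w) ∈ N.E.erase e ∧ ¬ N.IsRet w := by
    by_cases hxe : x = e.1
    · exact ⟨s, hxe ▸ hs, hsr⟩
    have hxout' : 1 ≤ N.outDeg x := by
      have hxu : u' ≠ x := fun h => hu (h ▸ hx)
      have hxv : v' ≠ x := fun h => hv (h ▸ hx)
      rwa [outDeg_snprPlusResult he hf hef, if_neg hxu, if_neg hxv] at hxout
    obtain ⟨w, hw, hwr⟩ := htc x hx hxout'
    exact ⟨w, (Multiset.mem_erase_of_ne fun h => hxe (congrArg Prod.fst h)).2 hw, hwr⟩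
  have hwf : (x, w) ≠ f := fun h => hxf (congrArg Prod.fst h)
  refine ⟨w, (mem_snprPlusResult_E hef).2 (.inl ((Multiset.mem_erase_of_ne hwf).2 hw)), ?_⟩
  exact (hret (hN.edge_mem _ (Multiset.mem_of_mem_erase hw)).2).not.2 hwr

lemma snprPlusTcCond_iff (hN : N.IsPhylo) (htc : N.TreeChild) (he : e ∈ N.E) (hf : f ∈ N.E) :
    N.SNPRplusTcCond e f ↔ N.PSedge e ∧ ¬ N.IsRet f.2 ∧ ¬ N.EdgeDesc e f ∧ f ≠ e := by
  constructor
  · rintro ⟨-, hdesc, u', v', hu, hv, huv, hM⟩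
    have hef : e ≠ f := by
      rintro rfl
      exact hN.not_treeChild_snprPlusResult_self he hu hv huv hM
    exact ⟨hN.pSedge_of_treeChild_snprPlusResult he hf hef hu hv huv hM,
      hN.not_isRet_snd_right_of_treeChild_snprPlusResult he hf hef hu hv huv hM, hdesc,
      hef.symm⟩
  · rintro ⟨hPS, hf2, hdesc, hfe⟩
    obtain ⟨u', hu⟩ := Infinite.exists_notMem_finset N.V
    obtain ⟨v', hv⟩ := Infinite.exists_notMem_finset (insert u' N.V)
    rw [Finset.mem_insert, not_or] at hv
    exact ⟨hPS.1.1, hdesc, u', v', hu, hv.2, Ne.symm hv.1,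
      hN.treeChild_snprPlusResult htc he hf hfe.symm hu hv.2 (Ne.symm hv.1) hPS hf2⟩

lemma card_filter_snprPlusTcCond_add_deltaT (hN : N.IsPhylo) (htc : N.TreeChild)
    (he : e ∈ N.E) (hPS : N.PSedge e) :
    Multiset.card (N.E.filter (N.SNPRplusTcCond e)) + (N.deltaT e + 1)
      = Multiset.card (N.E.filter fun g => ¬ N.IsRet g.2) := by
  set T := N.E.filter fun g => ¬ N.IsRet g.2 with hT
  have hcond :
      N.E.filter (N.SNPRplusTcCond e) = (T.filter (¬ N.EdgeDesc e ·)).filter (· ≠ e) := by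
    simp only [T, Multiset.filter_filter]
    exact Multiset.filter_congr fun f hf => by rw [hN.snprPlusTcCond_iff htc he hf]; tauto
  have hdelta : N.deltaT e = Multiset.card (T.filter (N.EdgeDesc e)) := by
    rw [deltaT, Multiset.filter_filter]
  have hcount : (T.filter (¬ N.EdgeDesc e ·)).count e = 1 := by
    rw [Multiset.count_filter_of_pos (p := (¬ N.EdgeDesc e ·)) (hN.not_edgeDesc_self he),
      hT, Multiset.count_filter_of_pos (p := fun g : ℕ × ℕ => ¬ N.IsRet g.2) hPS.1.2,
      hN.count_eq_one he hPS.1.2]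
  have hsplit := congrArg Multiset.card (Multiset.filter_add_not (N.EdgeDesc e) T)
  rw [Multiset.card_add] at hsplit
  have := Multiset.card_filter_ne_add_count (T.filter (¬ N.EdgeDesc e ·)) e
  rw [hcond, hdelta]
  omega

lemma numSNPRplusTc_eq_card_mul_sub (hN : N.IsPhylo) (htc : N.TreeChild) :
    (N.numSNPRplusTc : ℤ) = Multiset.card (N.E.filter N.PSedge)
      * ((Multiset.card (N.E.filter fun g => ¬ N.IsRet g.2) : ℤ) - 1) - N.sumDeltaT_PS := by
  have hzero : ∀ e ∈ N.E, ¬ N.PSedge e → Multiset.card (N.E.filter (N.SNPRplusTcCond e)) = 0 :=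
    fun e he hPS => Multiset.card_eq_zero.2 <| Multiset.filter_eq_nil.2 fun f hf hc =>
      hPS ((hN.snprPlusTcCond_iff htc he hf).1 hc).1
  have hPS : ∀ e ∈ N.E.filter N.PSedge, (Multiset.card (N.E.filter (N.SNPRplusTcCond e)) : ℤ)
      = ((Multiset.card (N.E.filter fun g => ¬ N.IsRet g.2) : ℤ) - 1) - N.deltaT e := by
    intro e he
    obtain ⟨he, hPS⟩ := Multiset.mem_filter.1 he
    have := hN.card_filter_snprPlusTcCond_add_deltaT htc he hPS
    omega
  rw [numSNPRplusTc, Multiset.sum_map_eq_sum_map_filter N.PSedge hzero, Nat.cast_multiset_sum,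
    Multiset.map_map, Function.comp_def, Multiset.map_congr rfl hPS, Multiset.sum_map_sub,
    Multiset.map_const', Multiset.sum_replicate, nsmul_eq_mul, sumDeltaT_PS,
    Nat.cast_multiset_sum, Multiset.map_map, Function.comp_def]

end IsPhylo

end RawNet

theorem numSNPRplusTc_eq_general (n : ℕ) (N : RawNet n)
    (hN : N.IsPhylo) (htc : N.TreeChild) :
    (N.numSNPRplusTc : ℤ) =
      4 * (n : ℤ) ^ 2 - 2 * (n : ℤ) * (N.numRet : ℤ) - 8 * (n : ℤ)
        - 2 * (N.numRet : ℤ) ^ 2 + 2 * (N.numRet : ℤ) + 4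
        - (N.sumDeltaT_PS : ℤ) := by
  have hin := hN.card_E_eq_via_inDeg
  have hout := hN.card_E_eq_via_outDeg
  have hret := hN.card_retEdges
  have hPS := hN.card_pSedges_add_card_retEdges htc
  have htree := congrArg Multiset.card (Multiset.filter_add_not (fun g => N.IsRet g.2) N.E)
  rw [Multiset.card_add] at htree
  have hPS' : (Multiset.card (N.E.filter N.PSedge) : ℤ) = 2 * n - 2 * N.numRet - 2 := by omega
  have htree' :
      (Multiset.card (N.E.filter fun g => ¬ N.IsRet g.2) : ℤ) = 2 * n + N.numRet - 1 := by
    omega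
  rw [hN.numSNPRplusTc_eq_card_mul_sub htc, hPS', htree']
  ring

/-- The number of tree-child respecting SNPR+ operations on a tree-child
network `N` with `n` leaves and `r` reticulations equals
`4n² − 2nr − 8n − 2r² + 2r + 4 − Σ_{e ∈ E_{PS}} δ_T(e)`. -/
theorem numSNPRplusTc_eq (n : ℕ) (hn : 2 ≤ n) (N : RawNet n)
    (hN : N.IsPhylo) (htc : N.TreeChild) :
    (N.numSNPRplusTc : ℤ) =
      4 * (n : ℤ) ^ 2 - 2 * (n : ℤ) * (N.numRet : ℤ) - 8 * (n : ℤ)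
        - 2 * (N.numRet : ℤ) ^ 2 + 2 * (N.numRet : ℤ) + 4
        - (N.sumDeltaT_PS : ℤ) :=
  numSNPRplusTc_eq_general n N hN htc
end
end

section
/- Let N be a tree-child network and let e be any reticulation edge of N. Then deleting e and suppressing the two resulting degree-two vertices yields again a tree-child network; that is, every SNPR− operation on a tree-child network is tree-child respecting. -/
/-!
Formalization of rooted binary phylogenetic networks (directed multigraphs with
labelled leaves), tree-child networks, and the SNPR / SNPR+ / SNPR− rearrangement
operations, following Klawitter, "The SNPR neighbourhood of tree-child networks".
-/

noncomputable section

attribute [local instance] Classical.propDecidable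

/-!
Write `e = (u, v)`. Tree-childness at `u` forces the second child `w` of `u` to be a tree
vertex, so `e` is not one of two parallel edges and the operation replaces the paths
`a → u → w` and `c → v → z` by the edges `(a, w)` and `(c, z)`. Every surviving vertex keeps
its in-degree, and a tree child `q` of a surviving vertex `p` either survives as well or is
`u`; in the latter case `p = a`, and `w` is a tree child of `a` afterwards.
-/

lemma Multiset.eq_of_mem_of_card_filter_eq_one {α : Type*} {p : α → Prop}
    [DecidablePred p] {s : Multiset α} {x y : α} (hs : (s.filter p).card = 1)
    (hx : x ∈ s) (hy : y ∈ s) (hpx : p x) (hpy : p y) : x = y := by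
  obtain ⟨b, hb⟩ := Multiset.card_eq_one.mp hs
  have hxb : x ∈ s.filter p := Multiset.mem_filter.mpr ⟨hx, hpx⟩
  have hyb : y ∈ s.filter p := Multiset.mem_filter.mpr ⟨hy, hpy⟩
  rw [hb, Multiset.mem_singleton] at hxb hyb
  rw [hxb, hyb]

namespace RawNet

variable {n : ℕ} {N M : RawNet n}

lemma inDeg_pos_of_mem {x y : ℕ} (h : (x, y) ∈ N.E) : 0 < N.inDeg y :=
  Multiset.card_pos_iff_exists_mem.mpr ⟨_, Multiset.mem_filter.mpr ⟨h, rfl⟩⟩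

lemma outDeg_pos_of_mem {x y : ℕ} (h : (x, y) ∈ N.E) : 0 < N.outDeg x :=
  Multiset.card_pos_iff_exists_mem.mpr ⟨_, Multiset.mem_filter.mpr ⟨h, rfl⟩⟩

lemma eq_of_inDeg_eq_one {x x' y : ℕ} (hy : N.inDeg y = 1) (hx : (x, y) ∈ N.E)
    (hx' : (x', y) ∈ N.E) : x' = x :=
  congrArg Prod.fst (Multiset.eq_of_mem_of_card_filter_eq_one hy hx' hx rfl rfl)

lemma eq_of_mem_erase_of_outDeg_eq_two {u v w w' : ℕ} (hu : N.outDeg u = 2)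
    (hv : (u, v) ∈ N.E) (hw : (u, w) ∈ N.E.erase (u, v)) (hw' : (u, w') ∈ N.E.erase (u, v)) :
    w' = w := by
  have hcard : ((N.E.erase (u, v)).filter (fun g => g.1 = u)).card = 1 := by
    rw [outDeg, ← Multiset.cons_erase hv,
      Multiset.filter_cons_of_pos (p := fun g : ℕ × ℕ => g.1 = u) _ rfl, Multiset.card_cons] at hu
    omega
  exact congrArg Prod.snd (Multiset.eq_of_mem_of_card_filter_eq_one hcard hw' hw rfl rfl)

namespace IsPhylo

variable (hN : N.IsPhylo)
include hN

lemma ne_of_mem {x y : ℕ} (h : (x, y) ∈ N.E) : x ≠ y := by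
  rintro rfl
  exact hN.acyclic x (.single h)

lemma swap_not_mem {x y : ℕ} (h : (x, y) ∈ N.E) : (y, x) ∉ N.E :=
  fun h' => hN.acyclic x (.head h (.single h'))

lemma inDeg_eq_one_and_outDeg_eq_two {a u v : ℕ} (hau : (a, u) ∈ N.E) (huv : (u, v) ∈ N.E)
    (hu : ¬ N.IsRet u) : N.inDeg u = 1 ∧ N.outDeg u = 2 := by
  have hin := inDeg_pos_of_mem hau
  have hout := outDeg_pos_of_mem huv
  rcases hN.classify u (hN.edge_mem _ huv).1 with rfl | ⟨i, rfl⟩ | h | h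
  · exact absurd hN.root_in hin.ne'
  · exact absurd (hN.leaf_out i) hout.ne'
  · exact h
  · exact absurd h.1 hu

end IsPhylo

section SuppressedEdges

/- `M` arises from `N` by deleting `(u, v)` and suppressing `u` and `v`; `R` holds the
untouched edges. -/
variable {R : Multiset (ℕ × ℕ)} {u v a w c z : ℕ}
  (hE : N.E = (u, v) ::ₘ (a, u) ::ₘ (u, w) ::ₘ (c, v) ::ₘ (v, z) ::ₘ R)
  (hM : M.E = R + {(a, w), (c, z)})
include hE hM

lemma inDeg_eq_of_suppress {x : ℕ} (hxu : x ≠ u) (hxv : x ≠ v) : M.inDeg x = N.inDeg x := by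
  simp only [inDeg, ← Multiset.countP_eq_card_filter, hM, hE, Multiset.countP_add,
    Multiset.insert_eq_cons, ← Multiset.cons_zero, Multiset.countP_cons, Multiset.countP_zero]
  simp [hxu.symm, hxv.symm]
  split_ifs <;> omega

lemma mem_of_suppress {p q : ℕ} (hpq : (p, q) ∈ N.E) (hpu : p ≠ u) (hpv : p ≠ v)
    (hqu : q ≠ u) (hqv : q ≠ v) : (p, q) ∈ M.E := by
  rw [hE] at hpq
  simp [hpu, hpv, hqu, hqv] at hpq
  simp [hM, hpq]

lemma exists_mem_of_mem_suppress {p q : ℕ} (hpq : (p, q) ∈ M.E) : ∃ q', (p, q') ∈ N.E := by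
  rw [hM] at hpq
  rw [hE]
  simp only [Multiset.mem_add, Multiset.insert_eq_cons, Multiset.mem_cons,
    Multiset.mem_singleton, Prod.mk.injEq] at hpq
  rcases hpq with h | ⟨rfl, -⟩ | ⟨rfl, -⟩
  · exact ⟨q, by simp [h]⟩
  · exact ⟨u, by simp⟩
  · exact ⟨v, by simp⟩

lemma TreeChild.of_suppress (htc : N.TreeChild) (hV : M.V = (N.V.erase u).erase v)
    (hv : N.IsRet v) (hparent : ∀ p, (p, u) ∈ N.E → p = a) (hw : ¬ N.IsRet w)
    (hwu : w ≠ u) (hwv : w ≠ v) : M.TreeChild := by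
  intro p hp hout
  obtain ⟨hpv, hpu, hpV⟩ : p ≠ v ∧ p ≠ u ∧ p ∈ N.V := by simpa [hV] using hp
  obtain ⟨q', hq'⟩ : ∃ q', (p, q') ∈ N.E := by
    obtain ⟨⟨p', q⟩, hmem⟩ := Multiset.card_pos_iff_exists_mem.mp hout
    obtain ⟨hpq, rfl⟩ := Multiset.mem_filter.mp hmem
    exact exists_mem_of_mem_suppress hE hM hpq
  obtain ⟨q, hpq, hq⟩ := htc p hpV (outDeg_pos_of_mem hq')
  by_cases hqu : q = u
  · subst hqu
    obtain rfl := hparent p hpq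
    refine ⟨w, by simp [hM], ?_⟩
    rwa [IsRet, inDeg_eq_of_suppress hE hM hwu hwv]
  · have hqv : q ≠ v := by rintro rfl; exact hq hv
    refine ⟨q, mem_of_suppress hE hM hpq hpu hpv hqu hqv, ?_⟩
    rwa [IsRet, inDeg_eq_of_suppress hE hM hqu hqv]

end SuppressedEdges

lemma snprMinusResult_V (u v a w c z : ℕ) :
    (N.snprMinusResult u v a w c z).V = (N.V.erase u).erase v := by
  unfold snprMinusResult
  split_ifs <;> rfl

lemma snprMinusResult_E_of_ne {u v a w c z : ℕ} (huc : u ≠ c) :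
    (N.snprMinusResult u v a w c z).E =
      (((((N.E.erase (u, v)).erase (a, u)).erase (u, w)).erase (c, v)).erase (v, z))
        + {(a, w), (c, z)} := by
  simp [snprMinusResult, huc]

lemma E_eq_cons_erase {u v a w c z : ℕ} (he : (u, v) ∈ N.E) (hau : (a, u) ∈ N.E)
    (huw : (u, w) ∈ N.E.erase (u, v)) (hcv : (c, v) ∈ N.E.erase (u, v)) (hvz : (v, z) ∈ N.E)
    (huv : u ≠ v) (hua : u ≠ a) (huc : u ≠ c) (hzu : z ≠ u) (hzv : z ≠ v) :
    N.E = (u, v) ::ₘ (a, u) ::ₘ (u, w) ::ₘ (c, v) ::ₘ (v, z) ::ₘ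
      (((((N.E.erase (u, v)).erase (a, u)).erase (u, w)).erase (c, v)).erase (v, z)) := by
  have m1 : (a, u) ∈ N.E.erase (u, v) := by simp [Multiset.mem_erase_of_ne, huv, hau]
  have m2 : (u, w) ∈ (N.E.erase (u, v)).erase (a, u) := by
    simp [Multiset.mem_erase_of_ne, hua, huw]
  have m3 : (c, v) ∈ ((N.E.erase (u, v)).erase (a, u)).erase (u, w) := by
    simp [Multiset.mem_erase_of_ne, huc.symm, huv.symm, hcv]
  have m4 : (v, z) ∈ (((N.E.erase (u, v)).erase (a, u)).erase (u, w)).erase (c, v) := by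
    simp [Multiset.mem_erase_of_ne, huv.symm, hzu, hzv, hvz]
  rw [Multiset.cons_erase m4, Multiset.cons_erase m3, Multiset.cons_erase m2,
    Multiset.cons_erase m1, Multiset.cons_erase he]

end RawNet

theorem snprMinus_treeChild_respecting_general (n : ℕ) (N : RawNet n)
    (hN : N.IsPhylo) (htc : N.TreeChild) :
    ∀ e ∈ N.E, N.IsRet e.2 → ¬ N.IsRet e.1 →
      ∀ a w c z, (a, e.1) ∈ N.E → (e.1, w) ∈ N.E.erase e → (c, e.2) ∈ N.E.erase e →
        (e.2, z) ∈ N.E → (N.snprMinusResult e.1 e.2 a w c z).TreeChild := by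
  rintro ⟨u, v⟩ he hv hu a w c z hau huw hcv hvz
  dsimp only at *
  have huwE : (u, w) ∈ N.E := Multiset.mem_of_mem_erase huw
  obtain ⟨hu_in, hu_out⟩ := hN.inDeg_eq_one_and_outDeg_eq_two hau he hu
  have hw : ¬ N.IsRet w := by
    obtain ⟨q, huq, hq⟩ := htc u (hN.edge_mem _ he).1 (by omega)
    rcases Multiset.mem_cons.mp (Multiset.cons_erase he ▸ huq) with h | huq'
    · obtain rfl : q = v := congrArg Prod.snd h
      exact absurd hv hq
    · rwa [← RawNet.eq_of_mem_erase_of_outDeg_eq_two hu_out he huw huq']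
  have hwv : w ≠ v := by rintro rfl; exact hw hv
  have huc : u ≠ c := by
    rintro rfl
    exact hwv (RawNet.eq_of_mem_erase_of_outDeg_eq_two hu_out he hcv huw)
  have hzu : z ≠ u := by rintro rfl; exact hN.swap_not_mem he hvz
  have hE := RawNet.E_eq_cons_erase he hau huw hcv hvz (hN.ne_of_mem he)
    (hN.ne_of_mem hau).symm huc hzu (hN.ne_of_mem hvz).symm
  exact htc.of_suppress hE (RawNet.snprMinusResult_E_of_ne huc)
    (RawNet.snprMinusResult_V _ _ _ _ _ _) hv (fun p => RawNet.eq_of_inDeg_eq_one hu_in hau)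
    hw (hN.ne_of_mem huwE).symm hwv

/-- Deleting any reticulation edge of a tree-child network and suppressing
the two resulting degree-two vertices yields again a tree-child network; that is, every
SNPR− operation on a tree-child network is tree-child respecting. -/
theorem snprMinus_treeChild_respecting (n : ℕ) (hn : 2 ≤ n) (N : RawNet n)
    (hN : N.IsPhylo) (htc : N.TreeChild) :
    ∀ e ∈ N.E, N.IsRet e.2 → ¬ N.IsRet e.1 →
      ∀ a w c z, (a, e.1) ∈ N.E → (e.1, w) ∈ N.E.erase e → (c, e.2) ∈ N.E.erase e →
        (e.2, z) ∈ N.E → (N.snprMinusResult e.1 e.2 a w c z).TreeChild :=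
  snprMinus_treeChild_respecting_general n N hN htc
end
end
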